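/- Let X be a flat of a matroid M on [n], M_X the restriction of M to X, and for v ∈ 𝕜^X (viewed as a coordinate subspace of 𝕜ⁿ), the complex (A(M_X), ·v) is a split subcomplex of (A(M), ·v); consequently ℛᵖ(M_X) ⊆ ℛᵖ(M) ∩ 𝕜^X for all p ≥ 0. -/

import Mathlib

open ExteriorAlgebra

/-- A circuit of a matroid: a minimal dependent set. -/
def IsCircuit {α : Type*} (M : Matroid α) (C : Set α) : Prop :=
  M.Dep C ∧ ∀ D ⊂ C, ¬ M.Dep D

/-- The exterior algebra `E = Λ(𝕜^α)`. -/
abbrev Ex (𝕜 : Type) [Field 𝕜] (α : Type) := ExteriorAlgebra 𝕜 (α → 𝕜)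

/-- The distinguished degree-one generators `e_i` of the exterior algebra. -/
noncomputable def gen (𝕜 : Type) [Field 𝕜] {α : Type} [DecidableEq α] (i : α) : Ex 𝕜 α :=
  ι 𝕜 (Pi.single i (1 : 𝕜))

/-- The derivation `∂` on the exterior algebra with `∂ e_i = 1` for all `i`
(contraction against the linear functional `v ↦ Σᵢ vᵢ`). -/
noncomputable def osd (𝕜 : Type) [Field 𝕜] {α : Type} [Fintype α] :
    Ex 𝕜 α →ₗ[𝕜] Ex 𝕜 α :=
  CliffordAlgebra.contractLeft (Q := (0 : QuadraticForm 𝕜 (α → 𝕜)))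
    (∑ i, LinearMap.proj i)

/-- The monomial `e_C = ∏_{i ∈ C} e_i`, indices in increasing order. -/
noncomputable def eProd (𝕜 : Type) [Field 𝕜] {α : Type} [DecidableEq α] [LinearOrder α]
    (C : Finset α) : Ex 𝕜 α :=
  ((C.sort (· ≤ ·)).map (gen 𝕜)).prod

/-- The relations `∂ e_C = 0` (for circuits `C`) defining the Orlik-Solomon algebra. -/
inductive osRel (𝕜 : Type) [Field 𝕜] {α : Type} [Fintype α] [LinearOrder α]
    (M : Matroid α) : Ex 𝕜 α → Ex 𝕜 α → Prop
  | mk (C : Finset α) : IsCircuit M (C : Set α) → osRel 𝕜 M (osd 𝕜 (eProd 𝕜 C)) 0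

/-- The Orlik-Solomon algebra `A(M) = E/I(M)`. -/
abbrev OS (𝕜 : Type) [Field 𝕜] {α : Type} [Fintype α] [LinearOrder α] (M : Matroid α) :=
  RingQuot (osRel 𝕜 M)

/-- The quotient map `E → A(M)`. -/
noncomputable def osπ (𝕜 : Type) [Field 𝕜] {α : Type} [Fintype α] [LinearOrder α]
    (M : Matroid α) : Ex 𝕜 α →ₐ[𝕜] OS 𝕜 M :=
  RingQuot.mkAlgHom 𝕜 (osRel 𝕜 M)

/-- The degree-`p` graded piece `A^p(M)` of the Orlik-Solomon algebra. -/
noncomputable def osPow (𝕜 : Type) [Field 𝕜] {α : Type} [Fintype α] [LinearOrder α]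
    (M : Matroid α) (p : ℕ) : Submodule 𝕜 (OS 𝕜 M) :=
  Submodule.map (osπ 𝕜 M).toLinearMap
    ((LinearMap.range (ι 𝕜 : (α → 𝕜) →ₗ[𝕜] Ex 𝕜 α)) ^ p)

/-- The graded piece one lower, `A^{p-1}(M)` (zero when `p = 0`). -/
noncomputable def osLowPow (𝕜 : Type) [Field 𝕜] {α : Type} [Fintype α] [LinearOrder α]
    (M : Matroid α) : ℕ → Submodule 𝕜 (OS 𝕜 M)
  | 0 => ⊥
  | (q + 1) => osPow 𝕜 M q

/-- The image of `v ∈ 𝕜^α` in `A¹(M)`. -/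
noncomputable def osv (𝕜 : Type) [Field 𝕜] {α : Type} [Fintype α] [LinearOrder α]
    (M : Matroid α) (v : α → 𝕜) : OS 𝕜 M :=
  osπ 𝕜 M (ι 𝕜 v)

/-- The `p`-cocycles of the complex `(A(M), ·v)`. -/
noncomputable def osCocycles (𝕜 : Type) [Field 𝕜] {α : Type} [Fintype α] [LinearOrder α]
    (M : Matroid α) (p : ℕ) (v : α → 𝕜) : Submodule 𝕜 (OS 𝕜 M) :=
  osPow 𝕜 M p ⊓ LinearMap.ker (LinearMap.mulRight 𝕜 (osv 𝕜 M v))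

/-- The `p`-coboundaries of the complex `(A(M), ·v)`. -/
noncomputable def osCobound (𝕜 : Type) [Field 𝕜] {α : Type} [Fintype α] [LinearOrder α]
    (M : Matroid α) (p : ℕ) (v : α → 𝕜) : Submodule 𝕜 (OS 𝕜 M) :=
  Submodule.map (LinearMap.mulRight 𝕜 (osv 𝕜 M v)) (osLowPow 𝕜 M p)

/-- `H^p(A(M), ·v) ≠ 0`, i.e. `v` lies in the resonance variety `ℛ^p(A(M))`. -/
def osResonates (𝕜 : Type) [Field 𝕜] {α : Type} [Fintype α] [LinearOrder α]
    (M : Matroid α) (p : ℕ) (v : α → 𝕜) : Prop :=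
  ¬ (osCocycles 𝕜 M p v ≤ osCobound 𝕜 M p v)

/-- `dim_𝕜 H^p(A(M), ·v)`. -/
noncomputable def osCohomDim (𝕜 : Type) [Field 𝕜] {α : Type} [Fintype α] [LinearOrder α]
    (M : Matroid α) (p : ℕ) (v : α → 𝕜) : ℕ :=
  Module.finrank 𝕜
    (↥(osCocycles 𝕜 M p v) ⧸
      ((osCobound 𝕜 M p v).comap (osCocycles 𝕜 M p v).subtype))

/-- The projective Orlik-Solomon algebra `Ā(M)`: the subalgebra of `A(M)` generated by
(the image of) `V̄ = {v : Σᵢ vᵢ = 0}`. -/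
noncomputable def osBar (𝕜 : Type) [Field 𝕜] {α : Type} [Fintype α] [LinearOrder α]
    (M : Matroid α) : Subalgebra 𝕜 (OS 𝕜 M) :=
  Algebra.adjoin 𝕜 ((fun v => osv 𝕜 M v) '' {v | ∑ i, v i = 0})

/-- The degree-`p` graded piece `Ā^p(M)` of the projective Orlik-Solomon algebra. -/
noncomputable def osBarPow (𝕜 : Type) [Field 𝕜] {α : Type} [Fintype α] [LinearOrder α]
    (M : Matroid α) (p : ℕ) : Submodule 𝕜 (OS 𝕜 M) :=
  osPow 𝕜 M p ⊓ (Subalgebra.toSubmodule (osBar 𝕜 M))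

noncomputable def osBarLowPow (𝕜 : Type) [Field 𝕜] {α : Type} [Fintype α] [LinearOrder α]
    (M : Matroid α) : ℕ → Submodule 𝕜 (OS 𝕜 M)
  | 0 => ⊥
  | (q + 1) => osBarPow 𝕜 M q

/-- `H^p(Ā(M), ·v) ≠ 0`, i.e. `v ∈ ℛ^p(Ā(M))` (for `v ∈ V̄`). -/
def osBarResonates (𝕜 : Type) [Field 𝕜] {α : Type} [Fintype α] [LinearOrder α]
    (M : Matroid α) (p : ℕ) (v : α → 𝕜) : Prop :=
  ¬ ((osBarPow 𝕜 M p ⊓ LinearMap.ker (LinearMap.mulRight 𝕜 (osv 𝕜 M v))) ≤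
      Submodule.map (LinearMap.mulRight 𝕜 (osv 𝕜 M v)) (osBarLowPow 𝕜 M p))

open scoped Classical

/-- Extension by zero `𝕜^X → 𝕜^n` of a coordinate subspace. -/
noncomputable def extByZero (𝕜 : Type) [Field 𝕜] {α : Type} (X : Set α) :
    (↥X → 𝕜) →ₗ[𝕜] (α → 𝕜) where
  toFun w i := if h : i ∈ X then w ⟨i, h⟩ else 0
  map_add' x y := by funext i; by_cases h : i ∈ X <;> simp [h]
  map_smul' c x := by funext i; by_cases h : i ∈ X <;> simp [h]

/-!
The inclusion `X ⊆ [n]` and the coordinate projection `𝕜ⁿ → 𝕜^X` induce maps of exterior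
algebras commuting with `∂`, and the composite `Λ(𝕜^X) → Λ(𝕜ⁿ) → Λ(𝕜^X)` is the identity.
Both descend to Orlik-Solomon algebras. A circuit of `M_X` is a circuit of `M`; a circuit `C`
of `M` either lies in `X`, and is then a circuit of `M_X`, or, because `X` is a flat, has at
least two elements outside `X`, so that the projection kills every term of `∂ e_C`. The
resulting retraction `Φ ∘ J = id` of complexes makes `H^p(A(M_X), ·v)` a direct summand of
`H^p(A(M), ·v)`.
-/

namespace ExteriorAlgebra

variable {R M N κ : Type*} [CommRing R] [AddCommGroup M] [Module R M] [AddCommGroup N]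
  [Module R N]

theorem contractLeft_map (f : Module.Dual R N) (g : M →ₗ[R] N) (x : ExteriorAlgebra R M) :
    CliffordAlgebra.contractLeft (Q := 0) f (map g x) =
      map g (CliffordAlgebra.contractLeft (Q := 0) (f ∘ₗ g) x) := by
  induction x using CliffordAlgebra.left_induction with
  | algebraMap r => simp [CliffordAlgebra.contractLeft_algebraMap]
  | add x y hx hy => simp only [map_add, hx, hy]
  | ι_mul x m hx =>
    rw [map_mul, map_apply_ι, CliffordAlgebra.contractLeft_ι_mul,
      CliffordAlgebra.contractLeft_ι_mul, hx]
    simp [map_apply_ι]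

theorem map_list_prod_ι_eq_zero (g : M →ₗ[R] N) (v : κ → M) {l : List κ} {a : κ}
    (ha : a ∈ l) (hga : g (v a) = 0) :
    map g (l.map fun i => ι R (v i)).prod = 0 := by
  rw [map_list_prod, List.map_map]
  exact List.prod_eq_zero (List.mem_map.2 ⟨a, ha, by simp [map_apply_ι, hga]⟩)

/-- The contraction `∂` of a product lowers it by one factor at a time, so a product with two
factors in `ker g` keeps one of them in each term. -/
theorem map_contractLeft_list_prod_ι_eq_zero (g : M →ₗ[R] N) (f : Module.Dual R M)
    (v : κ → M) {l : List κ} {a b : κ} (ha : a ∈ l) (hb : b ∈ l) (hab : a ≠ b)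
    (hga : g (v a) = 0) (hgb : g (v b) = 0) :
    map g (CliffordAlgebra.contractLeft (Q := 0) f (l.map fun i => ι R (v i)).prod) = 0 := by
  induction l with
  | nil => simp at ha
  | cons i l ih =>
    rw [List.map_cons, List.prod_cons, CliffordAlgebra.contractLeft_ι_mul, map_sub, map_smul,
      map_mul, map_apply_ι]
    rcases List.mem_cons.1 ha with rfl | ha' <;> rcases List.mem_cons.1 hb with rfl | hb'
    · exact absurd rfl hab
    · simp [map_list_prod_ι_eq_zero g v hb' hgb, hga]
    · simp [map_list_prod_ι_eq_zero g v ha' hga, hgb]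
    · simp [map_list_prod_ι_eq_zero g v ha' hga, ih ha' hb']

end ExteriorAlgebra

theorem isCircuit_iff_matroidIsCircuit {α : Type*} {M : Matroid α} {C : Set α} :
    IsCircuit M C ↔ M.IsCircuit C :=
  Set.minimal_iff_forall_ssubset.symm

namespace Matroid

variable {α : Type*} {M : Matroid α} {C X : Set α}

theorem restrictSubtype_isCircuit_iff (hX : X ⊆ M.E) {S : Set X} :
    (M.restrictSubtype X).IsCircuit S ↔ M.IsCircuit (Subtype.val '' S) := by
  have hdep (D : Set X) : (M.restrictSubtype X).Dep D ↔ M.Dep (Subtype.val '' D) := by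
    rw [← not_indep_iff, restrictSubtype_indep_iff,
      not_indep_iff ((Set.image_subset_range _ _).trans (by simpa using hX))]
  simp only [isCircuit_iff_dep_forall_sdiff_singleton_indep, hdep, restrictSubtype_indep_iff,
    Set.forall_mem_image, Set.image_sdiff Subtype.val_injective, Set.image_singleton]

theorem IsCircuit.nontrivial_sdiff_of_isFlat (hC : M.IsCircuit C) (hX : M.IsFlat X)
    (hCX : ¬ C ⊆ X) : (C \ X).Nontrivial := by
  obtain ⟨a, haC, haX⟩ := Set.not_subset.1 hCX
  by_contra hsub
  have hCa : C \ {a} ⊆ X := fun b ⟨hbC, hba⟩ => by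
    by_contra hbX
    exact hba (Set.not_nontrivial_iff.1 hsub ⟨hbC, hbX⟩ ⟨haC, haX⟩)
  apply haX
  rw [← hX.closure]
  exact M.closure_subset_closure hCa (hC.mem_closure_sdiff_singleton_of_mem haC)

end Matroid

section extByZero

open ExteriorAlgebra

variable (𝕜 : Type) [Field 𝕜] {α : Type} (X : Set α)

theorem funLeft_comp_extByZero :
    LinearMap.funLeft 𝕜 𝕜 (Subtype.val : X → α) ∘ₗ extByZero 𝕜 X = LinearMap.id := by
  ext w x
  simp [extByZero, x.2]

theorem map_funLeft_map_extByZero (x : Ex 𝕜 X) :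
    map (LinearMap.funLeft 𝕜 𝕜 (Subtype.val : X → α)) (map (extByZero 𝕜 X) x) = x := by
  rw [← AlgHom.comp_apply, map_comp_map, funLeft_comp_extByZero, map_id, AlgHom.id_apply]

theorem extByZero_single [DecidableEq α] (x : X) :
    extByZero 𝕜 X (Pi.single x 1) = Pi.single (x : α) 1 := by
  funext i
  by_cases hi : i ∈ X
  · simp [extByZero, hi, Pi.single_apply, Subtype.ext_iff]
  · simp [extByZero, hi, show i ≠ x from fun h => hi (h ▸ x.2)]

theorem funLeft_single_of_notMem [DecidableEq α] {i : α} (hi : i ∉ X) :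
    LinearMap.funLeft 𝕜 𝕜 (Subtype.val : X → α) (Pi.single i 1) = 0 := by
  funext x
  simp [show (x : α) ≠ i from fun h => hi (h ▸ x.2)]

theorem sum_proj_comp_extByZero [Fintype α] [Fintype X] :
    (∑ i, LinearMap.proj i) ∘ₗ extByZero 𝕜 X = ∑ x : X, LinearMap.proj (R := 𝕜) x := by
  refine LinearMap.ext fun w => ?_
  rw [← Fintype.sum_subtype_add_sum_subtype (· ∈ X)]
  simp only [extByZero, LinearMap.coe_comp, LinearMap.coe_mk, AddHom.coe_mk, Function.comp_apply,
    LinearMap.add_apply, LinearMap.coe_sum, LinearMap.coe_proj, Finset.sum_apply, Function.eval,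
    Subtype.coe_prop, dif_pos, Subtype.coe_eta, Finset.sum_const_zero, add_zero,
    Finset.sum_dite_of_false fun (x : {i // i ∉ X}) _ => x.2]
  -- the two sums over `X` may use different `Fintype X` instances
  convert rfl

theorem osd_map_extByZero [Fintype α] [Fintype X] (x : Ex 𝕜 X) :
    osd 𝕜 (map (extByZero 𝕜 X) x) = map (extByZero 𝕜 X) (osd 𝕜 x) := by
  rw [osd, contractLeft_map, sum_proj_comp_extByZero, osd]

theorem map_extByZero_eProd [LinearOrder α] (C : Finset X) :
    map (extByZero 𝕜 X) (eProd 𝕜 C) = eProd 𝕜 (C.map (Function.Embedding.subtype (· ∈ X))) := by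
  have hmono : StrictMonoOn (Function.Embedding.subtype (· ∈ X)) (C : Set X) :=
    fun _ _ _ _ h => h
  rw [eProd, eProd, ← hmono.map_finsetSort, map_list_prod,
    List.map_map, List.map_map]
  congr 1
  refine List.map_congr_left fun x _ => ?_
  simp [gen, map_apply_ι, extByZero_single]

end extByZero

section OrlikSolomon

open ExteriorAlgebra

variable (𝕜 : Type) [Field 𝕜] {α β : Type} [Fintype α] [LinearOrder α] [Fintype β]
  [LinearOrder β]

theorem osπ_osd_eProd_of_isCircuit (M : Matroid α) {C : Finset α} (hC : IsCircuit M C) :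
    osπ 𝕜 M (osd 𝕜 (eProd 𝕜 C)) = 0 := by
  have := RingQuot.mkAlgHom_rel 𝕜 (osRel.mk (𝕜 := 𝕜) (M := M) C hC)
  rwa [map_zero] at this

variable {M₁ : Matroid α} {M₂ : Matroid β}

section osMap

variable (g : (α → 𝕜) →ₗ[𝕜] (β → 𝕜))
  (hg : ∀ C : Finset α, IsCircuit M₁ C → osπ 𝕜 M₂ (map g (osd 𝕜 (eProd 𝕜 C))) = 0)

noncomputable def osMap : OS 𝕜 M₁ →ₐ[𝕜] OS 𝕜 M₂ :=
  RingQuot.liftAlgHom 𝕜 ⟨(osπ 𝕜 M₂).comp (map g), by rintro _ _ ⟨C, hC⟩; simpa using hg C hC⟩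

theorem osMap_osπ (x : Ex 𝕜 α) : osMap 𝕜 g hg (osπ 𝕜 M₁ x) = osπ 𝕜 M₂ (map g x) :=
  RingQuot.liftAlgHom_mkAlgHom_apply 𝕜 _ _ x

theorem osMap_osv (v : α → 𝕜) : osMap 𝕜 g hg (osv 𝕜 M₁ v) = osv 𝕜 M₂ (g v) := by
  rw [osv, osMap_osπ, map_apply_ι, osv]

theorem osMap_comp_osMap_of_comp_eq_id (g' : (β → 𝕜) →ₗ[𝕜] (α → 𝕜))
    (hg' : ∀ C : Finset β, IsCircuit M₂ C → osπ 𝕜 M₁ (map g' (osd 𝕜 (eProd 𝕜 C))) = 0)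
    (h : g' ∘ₗ g = LinearMap.id) :
    (osMap 𝕜 g' hg').comp (osMap 𝕜 g hg) = AlgHom.id 𝕜 (OS 𝕜 M₁) := by
  refine AlgHom.ext fun y => ?_
  obtain ⟨x, rfl⟩ := RingQuot.mkAlgHom_surjective 𝕜 _ y
  change osMap 𝕜 g' hg' (osMap 𝕜 g hg (osπ 𝕜 M₁ x)) = osπ 𝕜 M₁ x
  rw [osMap_osπ, osMap_osπ, ← AlgHom.comp_apply (map g'), map_comp_map, h, map_id,
    AlgHom.id_apply]

theorem map_osMap_osPow_le (p : ℕ) :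
    (osPow 𝕜 M₁ p).map (osMap 𝕜 g hg).toLinearMap ≤ osPow 𝕜 M₂ p := by
  have hcomm : (osMap 𝕜 g hg).toLinearMap ∘ₗ (osπ 𝕜 M₁).toLinearMap =
      (osπ 𝕜 M₂).toLinearMap ∘ₗ (map g).toLinearMap :=
    LinearMap.ext (osMap_osπ 𝕜 g hg)
  rw [osPow, osPow, ← Submodule.map_comp, hcomm, Submodule.map_comp, Submodule.map_pow,
    ι_range_map_map]
  gcongr
  exact LinearMap.map_le_range

theorem map_osMap_osLowPow_le (p : ℕ) :
    (osLowPow 𝕜 M₁ p).map (osMap 𝕜 g hg).toLinearMap ≤ osLowPow 𝕜 M₂ p := by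
  cases p with
  | zero => simp [osLowPow]
  | succ p => exact map_osMap_osPow_le 𝕜 g hg p

end osMap

/-- A cocycle `z` of `(A(M₁), ·v)` goes to the cocycle `J z`; if `J z = w · g v`, the retraction
`Φ` gives back `z = Φ w · v`. -/
theorem osResonates_of_comp_eq_id (g : (α → 𝕜) →ₗ[𝕜] (β → 𝕜))
    (hg : ∀ C : Finset α, IsCircuit M₁ C → osπ 𝕜 M₂ (map g (osd 𝕜 (eProd 𝕜 C))) = 0)
    (g' : (β → 𝕜) →ₗ[𝕜] (α → 𝕜))
    (hg' : ∀ C : Finset β, IsCircuit M₂ C → osπ 𝕜 M₁ (map g' (osd 𝕜 (eProd 𝕜 C))) = 0)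
    (h : g' ∘ₗ g = LinearMap.id) {p : ℕ} {v : α → 𝕜} (hres : osResonates 𝕜 M₁ p v) :
    osResonates 𝕜 M₂ p (g v) := by
  have hΦJ := AlgHom.congr_fun (osMap_comp_osMap_of_comp_eq_id 𝕜 g hg g' hg' h)
  have hΦv : osMap 𝕜 g' hg' (osv 𝕜 M₂ (g v)) = osv 𝕜 M₁ v := by
    rw [osMap_osv, ← LinearMap.comp_apply, h, LinearMap.id_apply]
  intro hle
  refine hres fun z ⟨hzp, hzv⟩ => ?_
  rw [SetLike.mem_coe, LinearMap.mem_ker, LinearMap.mulRight_apply] at hzv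
  have hJz : osMap 𝕜 g hg z ∈ osCocycles 𝕜 M₂ p (g v) := by
    refine ⟨map_osMap_osPow_le 𝕜 g hg p ⟨z, hzp, rfl⟩, ?_⟩
    rw [SetLike.mem_coe, LinearMap.mem_ker, LinearMap.mulRight_apply, ← osMap_osv 𝕜 g hg,
      ← map_mul, hzv, map_zero]
  obtain ⟨w, hw, hwz⟩ := hle hJz
  refine ⟨osMap 𝕜 g' hg' w, map_osMap_osLowPow_le 𝕜 g' hg' p ⟨w, hw, rfl⟩, ?_⟩
  rw [LinearMap.mulRight_apply] at hwz ⊢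
  rw [← hΦv, ← map_mul, hwz]
  exact hΦJ z

end OrlikSolomon

section restriction

open ExteriorAlgebra

variable (𝕜 : Type) [Field 𝕜] {α : Type} [Fintype α] [LinearOrder α] {M : Matroid α}
  {X : Set α}

theorem osπ_map_extByZero_osd_eProd (hX : X ⊆ M.E) (C : Finset X)
    (hC : IsCircuit (M.restrictSubtype X) C) :
    osπ 𝕜 M (map (extByZero 𝕜 X) (osd 𝕜 (eProd 𝕜 C))) = 0 := by
  rw [← osd_map_extByZero, map_extByZero_eProd]
  apply osπ_osd_eProd_of_isCircuit
  rw [isCircuit_iff_matroidIsCircuit, Finset.coe_map, Function.Embedding.coe_subtype]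
  exact (M.restrictSubtype_isCircuit_iff hX).1 (isCircuit_iff_matroidIsCircuit.1 hC)

theorem osπ_map_funLeft_osd_eProd (hX : M.IsFlat X) (C : Finset α) (hC : IsCircuit M C) :
    osπ 𝕜 (M.restrictSubtype X)
      (map (LinearMap.funLeft 𝕜 𝕜 (Subtype.val : X → α)) (osd 𝕜 (eProd 𝕜 C))) = 0 := by
  rw [isCircuit_iff_matroidIsCircuit] at hC
  by_cases hCX : (C : Set α) ⊆ X
  · have hC' : (C.subtype (· ∈ X)).map (Function.Embedding.subtype _) = C :=
      Finset.subtype_map_of_mem hCX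
    rw [← hC', ← map_extByZero_eProd, osd_map_extByZero, map_funLeft_map_extByZero]
    apply osπ_osd_eProd_of_isCircuit
    rw [isCircuit_iff_matroidIsCircuit, M.restrictSubtype_isCircuit_iff hX.subset_ground,
      ← Function.Embedding.coe_subtype, ← Finset.coe_map, hC']
    exact hC
  · obtain ⟨a, ⟨haC, haX⟩, b, ⟨hbC, hbX⟩, hab⟩ := hC.nontrivial_sdiff_of_isFlat hX hCX
    have hzero : map (LinearMap.funLeft 𝕜 𝕜 (Subtype.val : X → α)) (osd 𝕜 (eProd 𝕜 C)) = 0 :=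
      map_contractLeft_list_prod_ι_eq_zero _ _ (fun i => Pi.single i 1)
        ((C.mem_sort (· ≤ ·)).2 haC) ((C.mem_sort (· ≤ ·)).2 hbC) hab
        (funLeft_single_of_notMem 𝕜 X haX) (funLeft_single_of_notMem 𝕜 X hbX)
    rw [hzero, map_zero]

end restriction

theorem flat_restriction_split_general (𝕜 : Type) [Field 𝕜] {n : ℕ} (M : Matroid (Fin n))
    (X : Set (Fin n)) (hX : M.IsFlat X) :
    ∃ (J : OS 𝕜 (M.restrictSubtype X) →ₐ[𝕜] OS 𝕜 M)
      (Φ : OS 𝕜 M →ₐ[𝕜] OS 𝕜 (M.restrictSubtype X)),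
      (∀ x : Ex 𝕜 (↥X),
        J (osπ 𝕜 (M.restrictSubtype X) x) =
          osπ 𝕜 M (ExteriorAlgebra.map (extByZero 𝕜 X) x)) ∧
      Φ.comp J = AlgHom.id 𝕜 (OS 𝕜 (M.restrictSubtype X)) ∧
      (∀ v : ↥X → 𝕜, Φ (osv 𝕜 M (extByZero 𝕜 X v)) = osv 𝕜 (M.restrictSubtype X) v) ∧
      (∀ (p : ℕ) (v : ↥X → 𝕜),
        osResonates 𝕜 (M.restrictSubtype X) p v →
          osResonates 𝕜 M p (extByZero 𝕜 X v)) := by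
  have hJ := osπ_map_extByZero_osd_eProd 𝕜 (M := M) hX.subset_ground
  have hΦ := osπ_map_funLeft_osd_eProd 𝕜 hX
  have hΦJ := funLeft_comp_extByZero 𝕜 X
  refine ⟨osMap 𝕜 _ hJ, osMap 𝕜 _ hΦ, osMap_osπ 𝕜 _ hJ,
    osMap_comp_osMap_of_comp_eq_id 𝕜 _ hJ _ hΦ hΦJ, fun v => ?_,
    fun p v => osResonates_of_comp_eq_id 𝕜 _ hJ _ hΦ hΦJ⟩
  rw [osMap_osv, ← LinearMap.comp_apply, hΦJ, LinearMap.id_apply]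

/-- Let `X` be a flat of a matroid `M` on `[n]`, and `M_X` the restriction of `M` to
`X`.  For `v ∈ 𝕜^X` (viewed inside `𝕜^n` by extension by zero), the complex
`(A(M_X), ·v)` is a split subcomplex of `(A(M), ·v)`: there are algebra maps
`J : A(M_X) → A(M)` (induced by the inclusion) and `Φ : A(M) → A(M_X)` (induced by the
projection weak map) with `Φ ∘ J = id`, compatible with the differentials.
Consequently `ℛᵖ(M_X) ⊆ ℛᵖ(M) ∩ 𝕜^X` for all `p ≥ 0`. -/
theorem flat_restriction_split (𝕜 : Type) [Field 𝕜] {n : ℕ} (M : Matroid (Fin n))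
    (hE : M.E = Set.univ) (X : Set (Fin n)) (hX : M.IsFlat X) :
    ∃ (J : OS 𝕜 (M.restrictSubtype X) →ₐ[𝕜] OS 𝕜 M)
      (Φ : OS 𝕜 M →ₐ[𝕜] OS 𝕜 (M.restrictSubtype X)),
      (∀ x : Ex 𝕜 (↥X),
        J (osπ 𝕜 (M.restrictSubtype X) x) =
          osπ 𝕜 M (ExteriorAlgebra.map (extByZero 𝕜 X) x)) ∧
      Φ.comp J = AlgHom.id 𝕜 (OS 𝕜 (M.restrictSubtype X)) ∧
      (∀ v : ↥X → 𝕜, Φ (osv 𝕜 M (extByZero 𝕜 X v)) = osv 𝕜 (M.restrictSubtype X) v) ∧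
      (∀ (p : ℕ) (v : ↥X → 𝕜),
        osResonates 𝕜 (M.restrictSubtype X) p v →
          osResonates 𝕜 M p (extByZero 𝕜 X v)) :=
  flat_restriction_split_general 𝕜 M X hX
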